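/- Let K ∈ ℝ^{n×n}, Ỹ ∈ ℝ^{n×c}, Ω ⊆ {1,…,n}×{1,…,c}, λ ≥ 0, and let S₁, …, S_c ⊆ {1,…,n} be index sets whose union is all of {1,…,n}; for each k let K_k denote the row-submatrix of K consisting of the rows with index in S_k. Then for every matrix A ∈ ℝ^{n×c}, the objective value (1/2)·∑_{(i,j)∈Ω} ((KA)_{ij} − Ỹ_{ij})² + λ·(∑_{k=1}^c ‖K_k A‖_* − ‖K A‖_*) is nonnegative. -/

import Mathlib

/-- The nuclear norm of a real matrix `M`: the trace of the positive
semidefinite square root of `Mᵀ * M`. -/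
noncomputable def nuclearNorm {m n : Type*} [Fintype m] [Fintype n] [DecidableEq n]
    (M : Matrix m n ℝ) : ℝ :=
  ((Matrix.posSemidef_conjTranspose_mul_self M).1.eigenvectorUnitary.1 *
      Matrix.diagonal ((RCLike.ofReal : ℝ → ℝ) ∘ (√·) ∘ (Matrix.posSemidef_conjTranspose_mul_self M).1.eigenvalues) *
      (star (Matrix.posSemidef_conjTranspose_mul_self M).1.eigenvectorUnitary :
        Matrix n n ℝ)).trace

/-- The row-submatrix of `M` consisting of the rows whose index lies in `S`. -/
def rowSubmatrix {n m : Type*} (M : Matrix n m ℝ) (S : Finset n) :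
    Matrix {i // i ∈ S} m ℝ :=
  M.submatrix (fun i => (i : n)) id

/-!
The nuclear norm is dual to the operator norm: `‖M‖_* = max tr(Nᵀ M)` over contractions `N`
(`Nᵀ N ≤ 1`), the maximum being attained at the polar factor of `M`. Hence `‖·‖_*` is subadditive
and does not grow under left multiplication by a contraction. Assigning every row `i` to one block
`g i` with `i ∈ S (g i)` writes `K A = ∑ₖ Pₖ (Kₖ A)`, where the contraction `Pₖ` puts the rows of
`Kₖ A` assigned to `k` back in place and drops the others. So `‖K A‖_* ≤ ∑ₖ ‖Kₖ A‖_*`, and the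
objective is a sum of squares plus `λ` times a nonnegative number.
-/

open Matrix

lemma Matrix.conjTranspose_mul_apply_le_sqrt_mul_sqrt {m n : Type*} [Fintype m] (X Y : Matrix m n ℝ)
    (i : n) : (Xᴴ * Y) i i ≤ √((Xᴴ * X) i i) * √((Yᴴ * Y) i i) := by
  simpa only [mul_apply, conjTranspose_apply, star_trivial, sq] using
    Real.sum_mul_le_sqrt_mul_sqrt Finset.univ (fun j => X j i) (fun j => Y j i)

lemma Matrix.IsHermitian.star_eigenvectorUnitary_mul_mul_eq_diagonal {n : Type*} [Fintype n]
    [DecidableEq n] {A : Matrix n n ℝ} (hA : A.IsHermitian) :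
    star (hA.eigenvectorUnitary : Matrix n n ℝ) * A * hA.eigenvectorUnitary =
      diagonal hA.eigenvalues := by
  have := hA.conjStarAlgAut_star_eigenvectorUnitary
  rwa [Unitary.conjStarAlgAut_apply, Unitary.coe_star, star_star, RCLike.ofReal_real_eq_id,
    Function.id_comp] at this

section NuclearNorm

variable {l m n : Type*} [Fintype l] [Fintype m] [Fintype n] [DecidableEq n]

lemma nuclearNorm_eq_sum_sqrt_eigenvalues (M : Matrix m n ℝ) :
    nuclearNorm M = ∑ i, √((posSemidef_conjTranspose_mul_self M).1.eigenvalues i) := by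
  rw [nuclearNorm, trace_mul_cycle, Unitary.coe_star_mul_self, one_mul, trace_diagonal,
    RCLike.ofReal_real_eq_id, Function.id_comp]
  rfl

lemma trace_conjTranspose_mul_le_nuclearNorm {M N : Matrix m n ℝ}
    (hN : (1 - Nᴴ * N).PosSemidef) : (Nᴴ * M).trace ≤ nuclearNorm M := by
  set hG := (posSemidef_conjTranspose_mul_self M).1
  set V : Matrix n n ℝ := hG.eigenvectorUnitary.1
  have hVV : Vᴴ * V = 1 := Unitary.coe_star_mul_self hG.eigenvectorUnitary
  have hVV' : V * Vᴴ = 1 := Unitary.coe_mul_star_self hG.eigenvectorUnitary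
  have conj (X Y : Matrix m n ℝ) : (X * V)ᴴ * (Y * V) = Vᴴ * (Xᴴ * Y) * V := by
    simp only [conjTranspose_mul, Matrix.mul_assoc]
  have hNV (i : n) : ((N * V)ᴴ * (N * V)) i i ≤ 1 := by
    have h := (hN.conjTranspose_mul_mul_same V).diag_nonneg (i := i)
    rw [Matrix.mul_sub, Matrix.sub_mul, Matrix.mul_one, hVV, ← conj] at h
    simpa using h
  have hMV : (M * V)ᴴ * (M * V) = diagonal hG.eigenvalues := by
    rw [conj]; exact hG.star_eigenvectorUnitary_mul_mul_eq_diagonal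
  calc (Nᴴ * M).trace = ((N * V)ᴴ * (M * V)).trace := by
        rw [conj, trace_mul_cycle, hVV', one_mul]
    _ ≤ ∑ i, √(((N * V)ᴴ * (N * V)) i i) * √(((M * V)ᴴ * (M * V)) i i) :=
        Finset.sum_le_sum fun i _ => conjTranspose_mul_apply_le_sqrt_mul_sqrt _ _ i
    _ ≤ ∑ i, √(hG.eigenvalues i) := by
        refine Finset.sum_le_sum fun i _ => ?_
        rw [hMV, diagonal_apply_eq]
        exact mul_le_of_le_one_left (Real.sqrt_nonneg _) (Real.sqrt_le_one.2 (hNV i))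
    _ = nuclearNorm M := (nuclearNorm_eq_sum_sqrt_eigenvalues M).symm

lemma exists_trace_conjTranspose_mul_eq_nuclearNorm (M : Matrix m n ℝ) :
    ∃ N : Matrix m n ℝ, (1 - Nᴴ * N).PosSemidef ∧ (Nᴴ * M).trace = nuclearNorm M := by
  set hG := (posSemidef_conjTranspose_mul_self M).1
  set V : Matrix n n ℝ := hG.eigenvectorUnitary.1
  set μ := hG.eigenvalues
  have hVV' : V * Vᴴ = 1 := Unitary.coe_mul_star_self hG.eigenvectorUnitary
  have hdiag : Vᴴ * (Mᴴ * M) * V = diagonal μ := hG.star_eigenvectorUnitary_mul_mul_eq_diagonal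
  -- `N = M V D Vᴴ` is the polar factor of `M`; the junk value `(√0)⁻¹ = 0` kills `ker M`.
  set D : Matrix n n ℝ := diagonal fun i => (√(μ i))⁻¹
  have hD : Dᴴ = D := by simp [D]
  refine ⟨M * V * D * Vᴴ, ?_, ?_⟩
  · have hNN : (M * V * D * Vᴴ)ᴴ * (M * V * D * Vᴴ) = V * (D * diagonal μ * D) * Vᴴ := by
      simp only [← hdiag, conjTranspose_mul, conjTranspose_conjTranspose, hD, Matrix.mul_assoc]
    rw [hNN, show (1 : Matrix n n ℝ) = V * 1 * Vᴴ by rw [Matrix.mul_one, hVV'], ← Matrix.sub_mul,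
      ← Matrix.mul_sub]
    refine PosSemidef.mul_mul_conjTranspose_same ?_ V
    rw [diagonal_mul_diagonal, diagonal_mul_diagonal, ← diagonal_one, diagonal_sub]
    refine posSemidef_diagonal_iff.2 fun i => sub_nonneg.2 ?_
    rw [inv_mul_eq_div, Real.div_sqrt, ← div_eq_mul_inv]
    exact div_self_le_one _
  · calc ((M * V * D * Vᴴ)ᴴ * M).trace = (D * (Vᴴ * (Mᴴ * M) * V)).trace := by
          simp only [conjTranspose_mul, conjTranspose_conjTranspose, hD, Matrix.mul_assoc]
          rw [trace_mul_comm V]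
          simp only [Matrix.mul_assoc]
      _ = ∑ i, √(μ i) := by
          rw [hdiag, diagonal_mul_diagonal, trace_diagonal]
          simp only [inv_mul_eq_div, Real.div_sqrt]
      _ = nuclearNorm M := (nuclearNorm_eq_sum_sqrt_eigenvalues M).symm

lemma nuclearNorm_sum_le {ι : Type*} (s : Finset ι) (M : ι → Matrix m n ℝ) :
    nuclearNorm (∑ k ∈ s, M k) ≤ ∑ k ∈ s, nuclearNorm (M k) := by
  obtain ⟨N, hN, hNM⟩ := exists_trace_conjTranspose_mul_eq_nuclearNorm (∑ k ∈ s, M k)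
  rw [← hNM, Matrix.mul_sum, trace_sum]
  exact Finset.sum_le_sum fun k _ => trace_conjTranspose_mul_le_nuclearNorm hN

lemma nuclearNorm_mul_le_of_posSemidef_one_sub [DecidableEq l] {P : Matrix l m ℝ}
    (hP : (1 - P * Pᴴ).PosSemidef) (M : Matrix m n ℝ) : nuclearNorm (P * M) ≤ nuclearNorm M := by
  obtain ⟨N, hN, hNM⟩ := exists_trace_conjTranspose_mul_eq_nuclearNorm (P * M)
  have hPN : 1 - (Pᴴ * N)ᴴ * (Pᴴ * N) = (1 - Nᴴ * N) + Nᴴ * (1 - P * Pᴴ) * N := by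
    simp only [conjTranspose_mul, conjTranspose_conjTranspose, Matrix.mul_sub, Matrix.sub_mul,
      Matrix.one_mul, Matrix.mul_assoc]
    abel
  calc nuclearNorm (P * M) = ((Pᴴ * N)ᴴ * M).trace := by
        rw [← hNM, conjTranspose_mul, conjTranspose_conjTranspose, Matrix.mul_assoc]
    _ ≤ nuclearNorm M := trace_conjTranspose_mul_le_nuclearNorm <|
        hPN ▸ hN.add (hP.conjTranspose_mul_mul_same N)

end NuclearNorm

section AssignedRows

lemma rowSubmatrix_mul {n m q : Type*} [Fintype m] (K : Matrix n m ℝ) (A : Matrix m q ℝ)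
    (S : Finset n) : rowSubmatrix K S * A = rowSubmatrix (K * A) S :=
  rfl

variable {ι n q : Type*} [DecidableEq n] [DecidableEq ι]

def assignedRowEmbedding (g : n → ι) (k : ι) (S : Finset n) : Matrix n {i // i ∈ S} ℝ :=
  of fun i j => if g i = k ∧ (j : n) = i then 1 else 0

lemma assignedRowEmbedding_mul_conjTranspose (g : n → ι) (k : ι) (S : Finset n) :
    assignedRowEmbedding g k S * (assignedRowEmbedding g k S)ᴴ =
      diagonal fun i => if g i = k ∧ i ∈ S then 1 else 0 := by
  ext i i'
  simp only [assignedRowEmbedding, mul_apply, conjTranspose_apply, of_apply, star_trivial,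
    diagonal_apply]
  rw [Finset.sum_coe_sort S fun j =>
    (if g i = k ∧ j = i then (1 : ℝ) else 0) * if g i' = k ∧ j = i' then 1 else 0]
  have hsummand (j : n) :
      ((if g i = k ∧ j = i then (1 : ℝ) else 0) * if g i' = k ∧ j = i' then 1 else 0) =
        if i = j then (if i = i' ∧ g i = k then 1 else 0) else 0 := by
    split_ifs <;> grind
  simp only [hsummand, Finset.sum_ite_eq]
  split_ifs <;> simp_all

lemma assignedRowEmbedding_mul_rowSubmatrix {g : n → ι} {k : ι} {S : Finset n}
    (hS : ∀ i, g i = k → i ∈ S) (M : Matrix n q ℝ) :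
    assignedRowEmbedding g k S * rowSubmatrix M S = of fun i j => if g i = k then M i j else 0 := by
  ext i j
  by_cases h : g i = k
  · simp [assignedRowEmbedding, mul_apply, rowSubmatrix, h, hS i h,
      Finset.sum_attach S fun x => if x = i then M x j else 0]
  · simp [assignedRowEmbedding, mul_apply, h]

lemma posSemidef_one_sub_assignedRowEmbedding_mul_conjTranspose (g : n → ι) (k : ι)
    (S : Finset n) :
    (1 - assignedRowEmbedding g k S * (assignedRowEmbedding g k S)ᴴ).PosSemidef := by
  rw [assignedRowEmbedding_mul_conjTranspose, ← diagonal_one, diagonal_sub]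
  refine posSemidef_diagonal_iff.2 fun i => ?_
  split_ifs <;> norm_num

lemma sum_assignedRowEmbedding_mul_rowSubmatrix [Fintype ι] {g : n → ι} {S : ι → Finset n}
    (hg : ∀ i, i ∈ S (g i)) (M : Matrix n q ℝ) :
    ∑ k, assignedRowEmbedding g k (S k) * rowSubmatrix M (S k) = M := by
  rw [Finset.sum_congr rfl fun k _ =>
    assignedRowEmbedding_mul_rowSubmatrix (S := S k) (fun i (hi : g i = k) => hi ▸ hg i) M]
  ext i j
  simp [Matrix.sum_apply]

end AssignedRows

lemma nuclearNorm_le_sum_nuclearNorm_rowSubmatrix {ι n q : Type*} [Fintype ι] [Fintype n]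
    [Fintype q] [DecidableEq q] (M : Matrix n q ℝ) (S : ι → Finset n)
    (hS : ∀ i, ∃ k, i ∈ S k) :
    nuclearNorm M ≤ ∑ k, nuclearNorm (rowSubmatrix M (S k)) := by
  classical
  choose g hg using hS
  calc nuclearNorm M
      = nuclearNorm (∑ k, assignedRowEmbedding g k (S k) * rowSubmatrix M (S k)) := by
        rw [sum_assignedRowEmbedding_mul_rowSubmatrix hg]
    _ ≤ ∑ k, nuclearNorm (assignedRowEmbedding g k (S k) * rowSubmatrix M (S k)) :=
        nuclearNorm_sum_le _ _
    _ ≤ ∑ k, nuclearNorm (rowSubmatrix M (S k)) := Finset.sum_le_sum fun k _ =>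
        nuclearNorm_mul_le_of_posSemidef_one_sub
          (posSemidef_one_sub_assignedRowEmbedding_mul_conjTranspose g k (S k)) _

theorem objective_nonneg (n c : ℕ) (K : Matrix (Fin n) (Fin n) ℝ)
    (Ytil : Matrix (Fin n) (Fin c) ℝ) (Ω : Finset (Fin n × Fin c))
    (lam : ℝ) (hlam : 0 ≤ lam) (S : Fin c → Finset (Fin n))
    (hS : ∀ i : Fin n, ∃ k : Fin c, i ∈ S k) (A : Matrix (Fin n) (Fin c) ℝ) :
    0 ≤ (1 / 2) * ∑ p ∈ Ω, ((K * A) p.1 p.2 - Ytil p.1 p.2) ^ 2 +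
      lam * (∑ k : Fin c, nuclearNorm (rowSubmatrix K (S k) * A) -
        nuclearNorm (K * A)) := by
  have hsplit : nuclearNorm (K * A) ≤ ∑ k, nuclearNorm (rowSubmatrix K (S k) * A) := by
    simpa only [rowSubmatrix_mul] using nuclearNorm_le_sum_nuclearNorm_rowSubmatrix (K * A) S hS
  have hfit : 0 ≤ (1 / 2) * ∑ p ∈ Ω, ((K * A) p.1 p.2 - Ytil p.1 p.2) ^ 2 := by positivity
  exact add_nonneg hfit (mul_nonneg hlam (sub_nonneg.2 hsplit))
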